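/- (Lemma A.2, bias of the variance estimator.) Let U₁,…,Uₙ be i.i.d. pairs Uᵢ = (Xᵢ,Yᵢ) with Xᵢ ~ P, Yᵢ ~ Q, and n ≥ 4. Then |E[σ̂²] − σ²_{H₁*}| ≤ 72 ν² (9/n − 13/n² + 6/n³) ≤ 648 ν²/n. -/

import Mathlib

/-!
Expanding the squares, `E[σ̂²] = (4/n³) ∑_{i,j,l} E[H*ᵢⱼ H*ᵢₗ] - (4/n⁴) ∑_{i,j,l,r} E[H*ᵢⱼ H*ₗᵣ]`.
By independence, a term whose indices are pairwise distinct equals `E[H*₁₂ H*₁₃]`, resp.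
`(E[H*₁₂])²`, the two ingredients of `σ²_{H₁*}`. All these quantities are bounded by `9ν²`
because `|H*| ≤ 3ν`, so only the `n³ - n(n-1)(n-2)` triples and `n⁴ - n(n-1)(n-2)(n-3)`
quadruples with a repeated index contribute to the bias, each by at most `2 · 9ν²`; the
resulting bound `4/n³ · 18ν² (3n² - 2n) + 4/n⁴ · 18ν² (6n³ - 11n² + 6n)` is exactly
`72ν² (9/n - 13/n² + 6/n³)`.
-/

open MeasureTheory ProbabilityTheory Filter Finset

/-- `Hstar k (x,y) (x',y') = k(x,x') - k(x,y') - k(y,x')`. -/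
noncomputable def Hstar {𝒳 : Type*} (k : 𝒳 → 𝒳 → ℝ) (u v : 𝒳 × 𝒳) : ℝ :=
  k u.1 v.1 - k u.1 v.2 - k u.2 v.1

/-- The variance estimator
`σ̂² = (4/n³) ∑ᵢ (∑ⱼ H*ᵢⱼ)² − (4/n⁴) (∑ᵢ∑ⱼ H*ᵢⱼ)²` (sums include `i = j`). -/
noncomputable def sigmaHat {𝒳 : Type*} (k : 𝒳 → 𝒳 → ℝ) (n : ℕ) (u : Fin n → 𝒳 × 𝒳) : ℝ :=
  (4 / (n : ℝ) ^ 3) * ∑ i : Fin n, (∑ j : Fin n, Hstar k (u i) (u j)) ^ 2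
    - (4 / (n : ℝ) ^ 4) * (∑ i : Fin n, ∑ j : Fin n, Hstar k (u i) (u j)) ^ 2

/-- `σ²_{H₁*} = 4 (E[H*₁₂ H*₁₃] - (E[H*₁₂])²)`, expectations over i.i.d. pairs
with common law `m`, written as iterated integrals. -/
noncomputable def sigmaSqPop {𝒳 : Type*} [MeasurableSpace 𝒳]
    (m : Measure (𝒳 × 𝒳)) (k : 𝒳 → 𝒳 → ℝ) : ℝ :=
  4 * ((∫ u, (∫ v, (∫ w, Hstar k u v * Hstar k u w ∂m) ∂m) ∂m)
    - (∫ u, (∫ v, Hstar k u v ∂m) ∂m) ^ 2)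

theorem Nat.cast_descFactorial_three {S : Type*} [Ring S] (n : ℕ) :
    (n.descFactorial 3 : S) = n * (n - 1) * (n - 2) := by
  rw [← descPochhammer_eval_eq_descFactorial]; simp [descPochhammer_succ_eval]

theorem Nat.cast_descFactorial_four {S : Type*} [Ring S] (n : ℕ) :
    (n.descFactorial 4 : S) = n * (n - 1) * (n - 2) * (n - 3) := by
  rw [← descPochhammer_eval_eq_descFactorial]; simp [descPochhammer_succ_eval]

theorem abs_sum_sub_card_mul_le {β : Type*} [Fintype β] [DecidableEq β] (t : Finset β)
    {f : β → ℝ} {a C : ℝ} (hft : ∀ b ∈ t, f b = a) (hf : ∀ b, |f b| ≤ C) (ha : |a| ≤ C) :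
    |∑ b, f b - Fintype.card β * a| ≤ 2 * C * (Fintype.card β - #t) := by
  have hsplit : ∑ b, f b - Fintype.card β * a = ∑ b ∈ univ \ t, (f b - a) := by
    rw [← card_univ, ← nsmul_eq_mul, ← sum_const, ← sum_sub_distrib]
    exact (sum_subset (subset_univ _) fun b _ hb => by
      simp [hft b (by simpa using hb)]).symm
  calc |∑ b, f b - Fintype.card β * a|
      ≤ ∑ b ∈ univ \ t, |f b - a| := hsplit ▸ abs_sum_le_sum_abs _ _
    _ ≤ ∑ b ∈ univ \ t, 2 * C := sum_le_sum fun b _ => (abs_sub _ _).trans (by linarith [hf b])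
    _ = 2 * C * (Fintype.card β - #t) := by
      rw [sum_const, card_univ_sdiff, nsmul_eq_mul, Nat.cast_sub (card_le_univ t)]; ring

theorem abs_sum_triples_sub_le {n : ℕ} {f : Fin n × Fin n × Fin n → ℝ} {a C : ℝ}
    (hdist : ∀ i j l, i ≠ j → i ≠ l → j ≠ l → f (i, j, l) = a) (hf : ∀ p, |f p| ≤ C)
    (ha : |a| ≤ C) :
    |∑ p, f p - n ^ 3 * a| ≤ 2 * C * (n ^ 3 - n * (n - 1) * (n - 2)) := by
  let e : (Fin 3 ↪ Fin n) ↪ Fin n × Fin n × Fin n :=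
    ⟨fun x => (x 0, x 1, x 2), fun x y h => by ext c; fin_cases c <;> simp_all [Prod.ext_iff]⟩
  have h := abs_sum_sub_card_mul_le (univ.map e)
    (fun b hb => by
      obtain ⟨x, -, rfl⟩ := mem_map.1 hb
      apply hdist <;> exact x.injective.ne (by decide)) hf ha
  have hcard : (Fintype.card (Fin n × Fin n × Fin n) : ℝ) = n ^ 3 := by simp; ring
  rwa [card_map, card_univ, Fintype.card_embedding_eq, hcard, Fintype.card_fin,
    Fintype.card_fin, Nat.cast_descFactorial_three] at h

theorem abs_sum_quadruples_sub_le {n : ℕ} {f : Fin n × Fin n × Fin n × Fin n → ℝ} {a C : ℝ}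
    (hdist : ∀ i j l r, i ≠ j → i ≠ l → i ≠ r → j ≠ l → j ≠ r → l ≠ r → f (i, j, l, r) = a)
    (hf : ∀ q, |f q| ≤ C) (ha : |a| ≤ C) :
    |∑ q, f q - n ^ 4 * a| ≤ 2 * C * (n ^ 4 - n * (n - 1) * (n - 2) * (n - 3)) := by
  let e : (Fin 4 ↪ Fin n) ↪ Fin n × Fin n × Fin n × Fin n :=
    ⟨fun x => (x 0, x 1, x 2, x 3), fun x y h => by
      ext c; fin_cases c <;> simp_all [Prod.ext_iff]⟩
  have h := abs_sum_sub_card_mul_le (univ.map e)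
    (fun b hb => by
      obtain ⟨x, -, rfl⟩ := mem_map.1 hb
      apply hdist <;> exact x.injective.ne (by decide)) hf ha
  have hcard : (Fintype.card (Fin n × Fin n × Fin n × Fin n) : ℝ) = n ^ 4 := by simp; ring
  rwa [card_map, card_univ, Fintype.card_embedding_eq, hcard, Fintype.card_fin,
    Fintype.card_fin, Nat.cast_descFactorial_four] at h

theorem abs_normalized_sums_sub_le {N C S₃ S₄ a b : ℝ} (hN : 0 < N)
    (h₃ : |S₃ - N ^ 3 * a| ≤ 2 * C * (N ^ 3 - N * (N - 1) * (N - 2)))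
    (h₄ : |S₄ - N ^ 4 * b| ≤ 2 * C * (N ^ 4 - N * (N - 1) * (N - 2) * (N - 3))) :
    |4 / N ^ 3 * S₃ - 4 / N ^ 4 * S₄ - 4 * (a - b)|
      ≤ 8 * C * (9 / N - 13 / N ^ 2 + 6 / N ^ 3) := by
  calc |4 / N ^ 3 * S₃ - 4 / N ^ 4 * S₄ - 4 * (a - b)|
      = |4 / N ^ 3 * (S₃ - N ^ 3 * a) - 4 / N ^ 4 * (S₄ - N ^ 4 * b)| := by
        congr 1; field_simp; ring
    _ ≤ 4 / N ^ 3 * |S₃ - N ^ 3 * a| + 4 / N ^ 4 * |S₄ - N ^ 4 * b| := by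
        refine (abs_sub _ _).trans ?_
        rw [abs_mul, abs_mul, abs_of_pos (by positivity : (0 : ℝ) < 4 / N ^ 3),
          abs_of_pos (by positivity : (0 : ℝ) < 4 / N ^ 4)]
    _ ≤ 4 / N ^ 3 * (2 * C * (N ^ 3 - N * (N - 1) * (N - 2)))
        + 4 / N ^ 4 * (2 * C * (N ^ 4 - N * (N - 1) * (N - 2) * (N - 3))) := by gcongr
    _ = 8 * C * (9 / N - 13 / N ^ 2 + 6 / N ^ 3) := by field_simp; ring

theorem MeasureTheory.abs_integral_le_of_forall_abs_le {α : Type*} [MeasurableSpace α]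
    {μ : Measure α} [IsProbabilityMeasure μ] {f : α → ℝ} {C : ℝ} (h : ∀ x, |f x| ≤ C) :
    |∫ x, f x ∂μ| ≤ C := by
  simpa using norm_integral_le_of_norm_le_const (μ := μ)
    (ae_of_all _ fun x => (Real.norm_eq_abs (f x)).trans_le (h x))

namespace ProbabilityTheory

variable {Ω β γ : Type*} [MeasurableSpace Ω] [MeasurableSpace β] [MeasurableSpace γ]
  {μ : Measure Ω} [IsFiniteMeasure μ]

theorem IndepFun.integral_comp_eq_integral_integral {X : Ω → β} {Y : Ω → γ}
    (hXY : IndepFun X Y μ) (hX : Measurable X) (hY : Measurable Y) {F : β → γ → ℝ}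
    (hF : Integrable (Function.uncurry F) ((μ.map X).prod (μ.map Y))) :
    ∫ ω, F (X ω) (Y ω) ∂μ = ∫ x, ∫ y, F x y ∂(μ.map Y) ∂(μ.map X) := by
  have hmap := (indepFun_iff_map_prod_eq_prod_map_map hX.aemeasurable hY.aemeasurable).mp hXY
  calc ∫ ω, F (X ω) (Y ω) ∂μ
      = ∫ p, Function.uncurry F p ∂(μ.map fun ω => (X ω, Y ω)) :=
        (integral_map (hX.prodMk hY).aemeasurable (hmap ▸ hF.1)).symm
    _ = ∫ x, ∫ y, F x y ∂(μ.map Y) ∂(μ.map X) := by rw [hmap, integral_prod _ hF]; rfl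

variable {ι : Type*} {U : ι → Ω → β} {m : Measure β}

theorem iIndepFun.map_pair_eq_prod (hU : ∀ i, Measurable (U i)) (hind : iIndepFun U μ)
    (hlaw : ∀ i, μ.map (U i) = m) {i j : ι} (hij : i ≠ j) :
    μ.map (fun ω => (U i ω, U j ω)) = m.prod m := by
  have h := (indepFun_iff_map_prod_eq_prod_map_map (hU i).aemeasurable (hU j).aemeasurable).mp
    (hind.indepFun hij)
  rwa [hlaw i, hlaw j] at h

theorem iIndepFun.integral_comp_pair (hU : ∀ i, Measurable (U i)) (hind : iIndepFun U μ)
    (hlaw : ∀ i, μ.map (U i) = m) {i j : ι} (hij : i ≠ j) {F : β → β → ℝ}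
    (hF : Integrable (Function.uncurry F) (m.prod m)) :
    ∫ ω, F (U i ω) (U j ω) ∂μ = ∫ u, ∫ v, F u v ∂m ∂m := by
  rw [(hind.indepFun hij).integral_comp_eq_integral_integral (hU i) (hU j)
    (by rwa [hlaw, hlaw]), hlaw, hlaw]

theorem iIndepFun.integral_mul_comp_pair (hU : ∀ i, Measurable (U i)) (hind : iIndepFun U μ)
    (hlaw : ∀ i, μ.map (U i) = m) {i j l r : ι} (hij : i ≠ j) (hil : i ≠ l) (hir : i ≠ r)
    (hjl : j ≠ l) (hjr : j ≠ r) (hlr : l ≠ r) {F G : β → β → ℝ}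
    (hF : Integrable (Function.uncurry F) (m.prod m))
    (hG : Integrable (Function.uncurry G) (m.prod m)) :
    ∫ ω, F (U i ω) (U j ω) * G (U l ω) (U r ω) ∂μ
      = (∫ u, ∫ v, F u v ∂m ∂m) * ∫ u, ∫ v, G u v ∂m ∂m := by
  rw [← hind.integral_comp_pair hU hlaw hij hF, ← hind.integral_comp_pair hU hlaw hlr hG]
  exact (hind.indepFun_prodMk_prodMk hU i j l r hil hir hjl hjr).integral_fun_comp_mul_comp
    (f := Function.uncurry F) (g := Function.uncurry G)
    ((hU i).prodMk (hU j)).aemeasurable ((hU l).prodMk (hU r)).aemeasurable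
    (by rw [hind.map_pair_eq_prod hU hlaw hij]; exact hF.1)
    (by rw [hind.map_pair_eq_prod hU hlaw hlr]; exact hG.1)

variable [SFinite m]

theorem iIndepFun.integral_comp_triple (hU : ∀ i, Measurable (U i)) (hind : iIndepFun U μ)
    (hlaw : ∀ i, μ.map (U i) = m) {i j l : ι} (hij : i ≠ j) (hil : i ≠ l) (hjl : j ≠ l)
    {F : β → β → β → ℝ}
    (hF : Integrable (fun p : β × β × β => F p.1 p.2.1 p.2.2) (m.prod (m.prod m))) :
    ∫ ω, F (U i ω) (U j ω) (U l ω) ∂μ = ∫ u, ∫ v, ∫ w, F u v w ∂m ∂m ∂m := by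
  have hind' : IndepFun (U i) (fun ω => (U j ω, U l ω)) μ :=
    (hind.indepFun_prodMk hU j l i hij.symm hil.symm).symm
  have hpair := hind.map_pair_eq_prod hU hlaw hjl
  rw [hind'.integral_comp_eq_integral_integral (F := fun u p => F u p.1 p.2) (hU i)
    ((hU j).prodMk (hU l)) (by rw [hlaw, hpair]; exact hF), hlaw, hpair]
  refine integral_congr_ae ?_
  filter_upwards [hF.prod_right_ae] with u hu
  exact integral_prod _ hu

end ProbabilityTheory

section Hstar

variable {𝒳 : Type*} {k : 𝒳 → 𝒳 → ℝ} {ν : ℝ}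

theorem abs_Hstar_le (hbound : ∀ x x', |k x x'| ≤ ν) (u v : 𝒳 × 𝒳) :
    |Hstar k u v| ≤ 3 * ν := by
  have h₁ := abs_le.1 (hbound u.1 v.1)
  have h₂ := abs_le.1 (hbound u.1 v.2)
  have h₃ := abs_le.1 (hbound u.2 v.1)
  rw [Hstar, abs_le]
  constructor <;> linarith

theorem abs_Hstar_mul_Hstar_le (hbound : ∀ x x', |k x x'| ≤ ν) (u v w z : 𝒳 × 𝒳) :
    |Hstar k u v * Hstar k w z| ≤ 9 * ν ^ 2 := by
  have h₁ := abs_Hstar_le hbound u v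
  have h₂ := abs_Hstar_le hbound w z
  rw [abs_mul]
  nlinarith [abs_nonneg (Hstar k u v), abs_nonneg (Hstar k w z)]

theorem measurable_Hstar [MeasurableSpace 𝒳] (hk : Measurable (Function.uncurry k)) :
    Measurable (Function.uncurry (Hstar k)) :=
  ((hk.comp (measurable_fst.fst.prodMk measurable_snd.fst)).sub
    (hk.comp (measurable_fst.fst.prodMk measurable_snd.snd))).sub
    (hk.comp (measurable_fst.snd.prodMk measurable_snd.fst))

theorem sigmaHat_eq_sum_tuples (k : 𝒳 → 𝒳 → ℝ) (n : ℕ) (u : Fin n → 𝒳 × 𝒳) :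
    sigmaHat k n u
      = 4 / (n : ℝ) ^ 3 * ∑ p : Fin n × Fin n × Fin n,
          Hstar k (u p.1) (u p.2.1) * Hstar k (u p.1) (u p.2.2)
        - 4 / (n : ℝ) ^ 4 * ∑ q : Fin n × Fin n × Fin n × Fin n,
          Hstar k (u q.1) (u q.2.1) * Hstar k (u q.2.2.1) (u q.2.2.2) := by
  simp only [sigmaHat, Fintype.sum_prod_type, sq, Finset.sum_mul_sum]
  congr 2
  exact Finset.sum_congr rfl fun i _ => Finset.sum_comm

end Hstar

theorem integral_sigmaHat {𝒳 Ω : Type*} [MeasurableSpace 𝒳] [MeasurableSpace Ω]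
    {μ : Measure Ω} [IsFiniteMeasure μ] {k : 𝒳 → 𝒳 → ℝ} {ν : ℝ}
    (hk : Measurable (Function.uncurry k)) (hbound : ∀ x x', |k x x'| ≤ ν)
    {n : ℕ} {U : Fin n → Ω → 𝒳 × 𝒳} (hU : ∀ i, Measurable (U i)) :
    ∫ ω, sigmaHat k n (fun i => U i ω) ∂μ
      = 4 / (n : ℝ) ^ 3 * ∑ p : Fin n × Fin n × Fin n,
          ∫ ω, Hstar k (U p.1 ω) (U p.2.1 ω) * Hstar k (U p.1 ω) (U p.2.2 ω) ∂μ
        - 4 / (n : ℝ) ^ 4 * ∑ q : Fin n × Fin n × Fin n × Fin n,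
          ∫ ω, Hstar k (U q.1 ω) (U q.2.1 ω) * Hstar k (U q.2.2.1 ω) (U q.2.2.2 ω) ∂μ := by
  have hH := measurable_Hstar hk
  have hint : ∀ i j l r, Integrable
      (fun ω => Hstar k (U i ω) (U j ω) * Hstar k (U l ω) (U r ω)) μ := fun i j l r =>
    .of_bound ((hH.comp ((hU i).prodMk (hU j))).mul
      (hH.comp ((hU l).prodMk (hU r)))).aestronglyMeasurable (9 * ν ^ 2)
      (ae_of_all _ fun ω => abs_Hstar_mul_Hstar_le hbound _ _ _ _)
  simp_rw [sigmaHat_eq_sum_tuples]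
  rw [integral_sub ((integrable_finsetSum _ fun _ _ => hint _ _ _ _).const_mul _)
      ((integrable_finsetSum _ fun _ _ => hint _ _ _ _).const_mul _),
    integral_const_mul, integral_const_mul, integral_finsetSum _ fun _ _ => hint _ _ _ _,
    integral_finsetSum _ fun _ _ => hint _ _ _ _]

section Estimator

variable {𝒳 Ω : Type*} [MeasurableSpace 𝒳] [MeasurableSpace Ω] {μ : Measure Ω}
  [IsProbabilityMeasure μ] {m : Measure (𝒳 × 𝒳)} [IsProbabilityMeasure m] {k : 𝒳 → 𝒳 → ℝ}
  {ν : ℝ} {n : ℕ} {U : Fin n → Ω → 𝒳 × 𝒳}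

theorem abs_sum_integral_triples_sub_le (hk : Measurable (Function.uncurry k))
    (hbound : ∀ x x', |k x x'| ≤ ν) (hU : ∀ i, Measurable (U i)) (hindep : iIndepFun U μ)
    (hlaw : ∀ i, μ.map (U i) = m) :
    |∑ p : Fin n × Fin n × Fin n,
        ∫ ω, Hstar k (U p.1 ω) (U p.2.1 ω) * Hstar k (U p.1 ω) (U p.2.2 ω) ∂μ
      - n ^ 3 * ∫ u, ∫ v, ∫ w, Hstar k u v * Hstar k u w ∂m ∂m ∂m|
      ≤ 2 * (9 * ν ^ 2) * (n ^ 3 - n * (n - 1) * (n - 2)) := by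
  have hHH := abs_Hstar_mul_Hstar_le hbound
  have hint : Integrable (fun p : (𝒳 × 𝒳) × (𝒳 × 𝒳) × (𝒳 × 𝒳) =>
      Hstar k p.1 p.2.1 * Hstar k p.1 p.2.2) (m.prod (m.prod m)) :=
    .of_bound (by have := measurable_Hstar hk; fun_prop) (9 * ν ^ 2)
      (ae_of_all _ fun p => hHH _ _ _ _)
  exact abs_sum_triples_sub_le
    (fun _ _ _ hij hil hjl => hindep.integral_comp_triple hU hlaw hij hil hjl
      (F := fun u v w => Hstar k u v * Hstar k u w) hint)
    (fun _ => abs_integral_le_of_forall_abs_le fun _ => hHH _ _ _ _)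
    (abs_integral_le_of_forall_abs_le fun u => abs_integral_le_of_forall_abs_le fun v =>
      abs_integral_le_of_forall_abs_le fun w => hHH u v u w)

theorem abs_sum_integral_quadruples_sub_le (hk : Measurable (Function.uncurry k))
    (hbound : ∀ x x', |k x x'| ≤ ν) (hU : ∀ i, Measurable (U i)) (hindep : iIndepFun U μ)
    (hlaw : ∀ i, μ.map (U i) = m) :
    |∑ q : Fin n × Fin n × Fin n × Fin n,
        ∫ ω, Hstar k (U q.1 ω) (U q.2.1 ω) * Hstar k (U q.2.2.1 ω) (U q.2.2.2 ω) ∂μ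
      - n ^ 4 * ((∫ u, ∫ v, Hstar k u v ∂m ∂m) * ∫ u, ∫ v, Hstar k u v ∂m ∂m)|
      ≤ 2 * (9 * ν ^ 2) * (n ^ 4 - n * (n - 1) * (n - 2) * (n - 3)) := by
  have hθ : |∫ u, ∫ v, Hstar k u v ∂m ∂m| ≤ 3 * ν :=
    abs_integral_le_of_forall_abs_le fun u =>
      abs_integral_le_of_forall_abs_le fun v => abs_Hstar_le hbound u v
  have hint : Integrable (Function.uncurry (Hstar k)) (m.prod m) :=
    .of_bound (measurable_Hstar hk).aestronglyMeasurable (3 * ν)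
      (ae_of_all _ fun p => abs_Hstar_le hbound p.1 p.2)
  exact abs_sum_quadruples_sub_le
    (fun _ _ _ _ hij hil hir hjl hjr hlr =>
      hindep.integral_mul_comp_pair hU hlaw hij hil hir hjl hjr hlr hint hint)
    (fun _ => abs_integral_le_of_forall_abs_le fun _ => abs_Hstar_mul_Hstar_le hbound _ _ _ _)
    (by rw [abs_mul]; nlinarith [abs_nonneg (∫ u, ∫ v, Hstar k u v ∂m ∂m)])

end Estimator

theorem sigmaHat_bias_general {𝒳 Ω₀ : Type*} [MeasurableSpace 𝒳] [MeasurableSpace Ω₀]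
    (μ : Measure Ω₀) [IsProbabilityMeasure μ]
    (m : Measure (𝒳 × 𝒳)) [IsProbabilityMeasure m]
    (k : 𝒳 → 𝒳 → ℝ) (ν : ℝ)
    (hk : Measurable (Function.uncurry k))
    (hbound : ∀ x x', |k x x'| ≤ ν)
    (n : ℕ) (hn : 4 ≤ n)
    (U : Fin n → Ω₀ → 𝒳 × 𝒳)
    (hU : ∀ i, Measurable (U i))
    (hindep : iIndepFun U μ)
    (hlaw : ∀ i, Measure.map (U i) μ = m) :
    |(∫ ω, sigmaHat k n (fun i => U i ω) ∂μ) - sigmaSqPop m k| ≤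
        72 * ν ^ 2 * (9 / (n : ℝ) - 13 / (n : ℝ) ^ 2 + 6 / (n : ℝ) ^ 3) ∧
      72 * ν ^ 2 * (9 / (n : ℝ) - 13 / (n : ℝ) ^ 2 + 6 / (n : ℝ) ^ 3) ≤
        648 * ν ^ 2 / n := by
  have hn₄ : (4 : ℝ) ≤ n := by exact_mod_cast hn
  refine ⟨?_, ?_⟩
  · rw [integral_sigmaHat hk hbound hU, sigmaSqPop, sq]
    exact (abs_normalized_sums_sub_le (by linarith)
      (abs_sum_integral_triples_sub_le hk hbound hU hindep hlaw)
      (abs_sum_integral_quadruples_sub_le hk hbound hU hindep hlaw)).trans_eq (by ring)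
  · have h : 6 / (n : ℝ) ^ 3 ≤ 13 / (n : ℝ) ^ 2 := by
      rw [div_le_div_iff₀ (by positivity) (by positivity)]
      nlinarith [pow_pos (by linarith : (0 : ℝ) < n) 2]
    calc 72 * ν ^ 2 * (9 / (n : ℝ) - 13 / (n : ℝ) ^ 2 + 6 / (n : ℝ) ^ 3)
        ≤ 72 * ν ^ 2 * (9 / n) := by gcongr; linarith
      _ = 648 * ν ^ 2 / n := by ring

/-- Lemma A.2 (bias of the variance estimator):
`|E[σ̂²] − σ²_{H₁*}| ≤ 72ν² (9/n − 13/n² + 6/n³) ≤ 648ν²/n`. -/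
theorem sigmaHat_bias {𝒳 Ω₀ : Type*} [MeasurableSpace 𝒳] [MeasurableSpace Ω₀]
    (μ : Measure Ω₀) [IsProbabilityMeasure μ]
    (P Q : Measure 𝒳) [IsProbabilityMeasure P] [IsProbabilityMeasure Q]
    (m : Measure (𝒳 × 𝒳)) [IsProbabilityMeasure m]
    (k : 𝒳 → 𝒳 → ℝ) (ν : ℝ)
    (hk : Measurable (Function.uncurry k))
    (hsymm : ∀ x x', k x x' = k x' x)
    (hbound : ∀ x x', |k x x'| ≤ ν)
    (n : ℕ) (hn : 4 ≤ n)
    (U : Fin n → Ω₀ → 𝒳 × 𝒳)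
    (hU : ∀ i, Measurable (U i))
    (hindep : iIndepFun U μ)
    (hlaw : ∀ i, Measure.map (U i) μ = m)
    (hmP : m.map Prod.fst = P) (hmQ : m.map Prod.snd = Q) :
    |(∫ ω, sigmaHat k n (fun i => U i ω) ∂μ) - sigmaSqPop m k| ≤
        72 * ν ^ 2 * (9 / (n : ℝ) - 13 / (n : ℝ) ^ 2 + 6 / (n : ℝ) ^ 3) ∧
      72 * ν ^ 2 * (9 / (n : ℝ) - 13 / (n : ℝ) ^ 2 + 6 / (n : ℝ) ^ 3) ≤
        648 * ν ^ 2 / n :=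
  sigmaHat_bias_general μ m k ν hk hbound n hn U hU hindep hlaw
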